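/- arXiv:cond-mat/0603694 — 3 statements merged into one kernel-verified Lean document; each statement's English description precedes it below -/
import Mathlib

section
/- Let X be a finite ultrametric space with positive additive measure ν, tree of balls S with maximal ball K, points S_min, and let T be a real-valued function on the non-minimal balls. Then Σ_{I,J ∈ S_min, I ≠ J} ν(I)·ν(J)·T(sup(I,J)) = Σ_{J ∈ S \ S_min} T(J)·Δν²(J), where Δν²(J) = ν(J)² − Σ_j ν(J_j)² with J_j ranging over the maximal proper subballs of J. -/
open scoped Classical
open Finset

noncomputable section

variable {X : Type*} [Fintype X] [DecidableEq X]

/-- `d` is an ultrametric on the finite space `X`. -/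
def IsUltra (d : X → X → ℝ) : Prop :=
  (∀ x y, 0 ≤ d x y) ∧ (∀ x y, d x y = 0 ↔ x = y) ∧ (∀ x y, d x y = d y x) ∧
    (∀ x y z, d x y ≤ max (d x z) (d z y))

/-- `B` is a ball of the ultrametric space `(X, d)`. -/
def IsBall (d : X → X → ℝ) (B : Finset X) : Prop :=
  ∃ x r, 0 ≤ r ∧ B = Finset.univ.filter (fun y => d x y ≤ r)

/-- `C` is a maximal proper subball of the ball `B`. -/
def MaxSub (d : X → X → ℝ) (B C : Finset X) : Prop :=
  IsBall d C ∧ C ⊂ B ∧ ∀ D, IsBall d D → C ⊆ D → D ⊂ B → D = C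

/-- The measure of a set: sum of the point masses `m`. -/
def nu (m : X → ℝ) (B : Finset X) : ℝ := ∑ x ∈ B, m x

/-- `Δν²(B) = ν(B)² - ∑_j ν(B_j)²` over the maximal proper subballs of `B`. -/
def dnu2 (d : X → X → ℝ) (m : X → ℝ) (B : Finset X) : ℝ :=
  nu m B ^ 2 - ∑ C ∈ Finset.univ.filter (MaxSub d B), nu m C ^ 2

/-- `Δν³(B) = ν(B)³ - ∑_j ν(B_j)³` over the maximal proper subballs of `B`. -/
def dnu3 (d : X → X → ℝ) (m : X → ℝ) (B : Finset X) : ℝ :=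
  nu m B ^ 3 - ∑ C ∈ Finset.univ.filter (MaxSub d B), nu m C ^ 3

/-- `sb x y` is the minimal ball containing the two points `x`, `y`. -/
def SupSpec (d : X → X → ℝ) (sb : X → X → Finset X) : Prop :=
  ∀ x y, IsBall d (sb x y) ∧ x ∈ sb x y ∧ y ∈ sb x y ∧
    ∀ B, IsBall d B → x ∈ B → y ∈ B → sb x y ⊆ B

/-- `pr L A` is the maximal proper subball of `L` containing the subball `A` (the
ball denoted `(L-1, A)` in the paper). -/
def PredSpec (d : X → X → ℝ) (pr : Finset X → Finset X → Finset X) : Prop :=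
  ∀ L A, IsBall d L → IsBall d A → A ⊂ L → MaxSub d L (pr L A) ∧ A ⊆ pr L A

lemma singleton_ball (d : X → X → ℝ) (hd : IsUltra d) (x : X) : IsBall d {x} := by
  obtain ⟨h0, heq, hsymm, htri⟩ := hd
  refine ⟨x, 0, le_refl 0, ?_⟩
  ext y
  simp only [Finset.mem_singleton, Finset.mem_filter, Finset.mem_univ, true_and]
  constructor
  · rintro rfl; exact le_of_eq ((heq _ _).mpr rfl)
  · intro h; exact ((heq x y).mp (le_antisymm h (h0 x y))).symm

-- nesting

lemma ball_nested (d : X → X → ℝ) (hd : IsUltra d) {B C : Finset X}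
    (hB : IsBall d B) (hC : IsBall d C) {x : X} (hxB : x ∈ B) (hxC : x ∈ C) :
    B ⊆ C ∨ C ⊆ B := by
  obtain ⟨h0, heq, hsymm, htri⟩ := hd
  obtain ⟨b, rb, hrb, rfl⟩ := hB
  obtain ⟨c, rc, hrc, rfl⟩ := hC
  simp only [Finset.mem_filter, Finset.mem_univ, true_and] at hxB hxC
  have key : ∀ (b c : X) (rb rc : ℝ), rb ≤ rc → d b x ≤ rb → d c x ≤ rc →
      Finset.univ.filter (fun y => d b y ≤ rb) ⊆ Finset.univ.filter (fun y => d c y ≤ rc) := by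
    intro b c rb rc hr hbx hcx y hy
    simp only [Finset.mem_filter, Finset.mem_univ, true_and] at hy ⊢
    calc d c y ≤ max (d c x) (d x y) := htri _ _ _
      _ ≤ rc := by
          refine max_le hcx ?_
          calc d x y ≤ max (d x b) (d b y) := htri _ _ _
            _ ≤ rc := max_le (by rw [hsymm]; exact hbx.trans hr) (hy.trans hr)
  rcases le_total rb rc with h | h
  · exact Or.inl (key b c rb rc h hxB hxC)
  · exact Or.inr (key c b rc rb h hxC hxB)

lemma maxsub_exists (d : X → X → ℝ) (hd : IsUltra d) {B : Finset X}
    (hB : IsBall d B) (hcard : 1 < B.card) {x : X} (hx : x ∈ B) :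
    ∃ C, MaxSub d B C ∧ x ∈ C := by
  set s : Finset (Finset X) :=
    Finset.univ.filter (fun C => IsBall d C ∧ x ∈ C ∧ C ⊂ B) with hs
  have hne : s.Nonempty := by
    refine ⟨{x}, ?_⟩
    simp only [hs, Finset.mem_filter, Finset.mem_univ, true_and]
    refine ⟨singleton_ball d hd x, Finset.mem_singleton_self x, ?_⟩
    refine Finset.ssubset_iff_subset_ne.mpr ⟨Finset.singleton_subset_iff.mpr hx, ?_⟩
    intro h; rw [← h] at hcard; simp at hcard
  obtain ⟨C, hCs, hCmax⟩ := s.exists_max_image Finset.card hne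
  simp only [hs, Finset.mem_filter, Finset.mem_univ, true_and] at hCs
  obtain ⟨hCball, hxC, hCB⟩ := hCs
  refine ⟨C, ⟨hCball, hCB, ?_⟩, hxC⟩
  intro D hDball hCD hDB
  have hDs : D ∈ s := by
    simp only [hs, Finset.mem_filter, Finset.mem_univ, true_and]
    exact ⟨hDball, hCD hxC, hDB⟩
  exact (Finset.eq_of_subset_of_card_le hCD (hCmax D hDs)).symm

lemma maxsub_unique (d : X → X → ℝ) (hd : IsUltra d) {B C₁ C₂ : Finset X}
    (h1 : MaxSub d B C₁) (h2 : MaxSub d B C₂) {x : X} (hx1 : x ∈ C₁) (hx2 : x ∈ C₂) :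
    C₁ = C₂ := by
  rcases ball_nested d hd h1.1 h2.1 hx1 hx2 with h | h
  · exact (h1.2.2 C₂ h2.1 h h2.2.1).symm
  · exact h2.2.2 C₁ h1.1 h h1.2.1

def msb (d : X → X → ℝ) (B : Finset X) (x : X) : Finset X :=
  if h : ∃ C, MaxSub d B C ∧ x ∈ C then h.choose else ∅

lemma msb_spec (d : X → X → ℝ) (hd : IsUltra d) {B : Finset X}
    (hB : IsBall d B) (hcard : 1 < B.card) {x : X} (hx : x ∈ B) :
    MaxSub d B (msb d B x) ∧ x ∈ msb d B x := by
  have h := maxsub_exists d hd hB hcard hx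
  rw [msb, dif_pos h]
  exact h.choose_spec

lemma mem_msb_iff (d : X → X → ℝ) (hd : IsUltra d) {B C : Finset X}
    (hB : IsBall d B) (hcard : 1 < B.card) {x : X} (hx : x ∈ B)
    (hC : MaxSub d B C) : x ∈ C ↔ msb d B x = C := by
  obtain ⟨hM, hxM⟩ := msb_spec d hd hB hcard hx
  constructor
  · intro hxC; exact maxsub_unique d hd hM hC hxM hxC
  · rintro rfl; exact hxM

lemma key_iff (d : X → X → ℝ) (sb : X → X → Finset X)
    (hd : IsUltra d) (hsb : SupSpec d sb) {B : Finset X}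
    (hB : IsBall d B) (hcard : 1 < B.card) {I J : X} (hI : I ∈ B) (hJ : J ∈ B) :
    (J ≠ I ∧ sb I J = B) ↔ msb d B I ≠ msb d B J := by
  obtain ⟨hball, hIs, hJs, hmin⟩ := hsb I J
  obtain ⟨hMI, hIMI⟩ := msb_spec d hd hB hcard hI
  obtain ⟨hMJ, hJMJ⟩ := msb_spec d hd hB hcard hJ
  constructor
  · rintro ⟨hne, hsbB⟩ heq
    -- I, J are in the same maximal subball, so sb I J ⊆ msb ... ⊂ B
    have hJMI : J ∈ msb d B I := heq ▸ hJMJ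
    have hsub : sb I J ⊆ msb d B I := hmin _ hMI.1 hIMI hJMI
    rw [hsbB] at hsub
    exact (hMI.2.1.not_subset) hsub
  · intro hne
    have hIJ : J ≠ I := by rintro rfl; exact hne rfl
    refine ⟨hIJ, ?_⟩
    have hsubB : sb I J ⊆ B := hmin B hB hI hJ
    by_contra hneq
    have hss : sb I J ⊂ B := ⟨hsubB, fun h => hneq (Finset.Subset.antisymm hsubB h)⟩
    -- sb I J and msb d B I both contain I, hence comparable
    rcases ball_nested d hd hball hMI.1 hIs hIMI with h | h
    · -- sb I J ⊆ msb d B I, so J ∈ msb d B I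
      have : msb d B J = msb d B I :=
        maxsub_unique d hd hMJ hMI hJMJ (h hJs)
      exact hne this.symm
    · -- msb d B I ⊆ sb I J ⊂ B, maximality gives equality
      have : sb I J = msb d B I := hMI.2.2 _ hball h hss
      have : msb d B J = msb d B I :=
        maxsub_unique d hd hMJ hMI hJMJ (this ▸ hJs)
      exact hne this.symm

/-- `∑_{I ≠ J} ν(I) ν(J) T(sup(I,J)) = ∑_{J ∈ S \ S_min} T(J) Δν²(J)`. -/
theorem sum_offdiag_replica (d : X → X → ℝ) (m : X → ℝ)
    (sb : X → X → Finset X) (T : Finset X → ℝ)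
    (hd : IsUltra d) (hm : ∀ x, 0 < m x) (hsb : SupSpec d sb) :
    ∑ I : X, ∑ J ∈ Finset.univ.filter (fun J : X => J ≠ I), m I * m J * T (sb I J)
      = ∑ B ∈ Finset.univ.filter (fun B : Finset X => IsBall d B ∧ 1 < B.card),
          T B * dnu2 d m B := by
  classical
  set Q : Finset (Finset X) := Finset.univ.filter (fun B : Finset X => IsBall d B ∧ 1 < B.card) with hQ
  set P : Finset (X × X) := (Finset.univ ×ˢ Finset.univ).filter (fun p : X × X => p.2 ≠ p.1) with hP
  have step1 : (∑ I : X, ∑ J ∈ Finset.univ.filter (fun J : X => J ≠ I), m I * m J * T (sb I J))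
      = ∑ p ∈ P, m p.1 * m p.2 * T (sb p.1 p.2) := by
    rw [hP, Finset.sum_filter, Finset.sum_product]
    refine Finset.sum_congr rfl fun I _ => ?_
    rw [Finset.sum_filter]
  rw [step1]
  have hmaps : ∀ p ∈ P, sb p.1 p.2 ∈ Q := by
    intro p hp
    simp only [hP, Finset.mem_filter, Finset.mem_product] at hp
    obtain ⟨hball, h1, h2, _⟩ := hsb p.1 p.2
    simp only [hQ, Finset.mem_filter, Finset.mem_univ, true_and]
    exact ⟨hball, Finset.one_lt_card.mpr ⟨p.1, h1, p.2, h2, fun h => hp.2 h.symm⟩⟩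
  rw [← Finset.sum_fiberwise_of_maps_to hmaps (fun p => m p.1 * m p.2 * T (sb p.1 p.2))]
  refine Finset.sum_congr rfl fun B hB => ?_
  simp only [hQ, Finset.mem_filter, Finset.mem_univ, true_and] at hB
  obtain ⟨hBball, hBcard⟩ := hB
  have hset : P.filter (fun p => sb p.1 p.2 = B)
      = (B ×ˢ B).filter (fun p : X × X => msb d B p.1 ≠ msb d B p.2) := by
    ext p
    simp only [hP, Finset.filter_filter, Finset.mem_filter, Finset.mem_product,
      Finset.mem_univ, true_and]
    constructor
    · rintro ⟨hne, hsbB⟩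
      obtain ⟨_, h1, h2, _⟩ := hsb p.1 p.2
      have h1B : p.1 ∈ B := hsbB ▸ h1
      have h2B : p.2 ∈ B := hsbB ▸ h2
      exact ⟨⟨h1B, h2B⟩, (key_iff d sb hd hsb hBball hBcard h1B h2B).mp ⟨hne, hsbB⟩⟩
    · rintro ⟨⟨h1B, h2B⟩, hne⟩
      exact (key_iff d sb hd hsb hBball hBcard h1B h2B).mpr hne
  have hcong : ∑ p ∈ P.filter (fun p => sb p.1 p.2 = B), m p.1 * m p.2 * T (sb p.1 p.2)
      = ∑ p ∈ P.filter (fun p => sb p.1 p.2 = B), m p.1 * m p.2 * T B := by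
    refine Finset.sum_congr rfl fun p hp => ?_
    rw [(Finset.mem_filter.mp hp).2]
  rw [hcong, hset]
  have hsum2 : ∑ p ∈ (B ×ˢ B).filter (fun p : X × X => msb d B p.1 ≠ msb d B p.2),
      m p.1 * m p.2 = dnu2 d m B := by
    have hsplit := Finset.sum_filter_add_sum_filter_not (B ×ˢ B)
      (fun p : X × X => msb d B p.1 = msb d B p.2) (fun p => m p.1 * m p.2)
    have htot : ∑ p ∈ B ×ˢ B, m p.1 * m p.2 = nu m B ^ 2 := by
      rw [Finset.sum_product]
      unfold nu
      rw [sq, Finset.sum_mul_sum]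
    have hsame : ∑ p ∈ (B ×ˢ B).filter (fun p : X × X => msb d B p.1 = msb d B p.2),
        m p.1 * m p.2 = ∑ C ∈ Finset.univ.filter (MaxSub d B), nu m C ^ 2 := by
      have hmaps2 : ∀ p ∈ (B ×ˢ B).filter (fun p : X × X => msb d B p.1 = msb d B p.2),
          msb d B p.1 ∈ Finset.univ.filter (MaxSub d B) := by
        intro p hp
        simp only [Finset.mem_filter, Finset.mem_product] at hp
        simp only [Finset.mem_filter, Finset.mem_univ, true_and]
        exact (msb_spec d hd hBball hBcard hp.1.1).1
      rw [← Finset.sum_fiberwise_of_maps_to hmaps2 (fun p => m p.1 * m p.2)]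
      refine Finset.sum_congr rfl fun C hC => ?_
      simp only [Finset.mem_filter, Finset.mem_univ, true_and] at hC
      have hfib : ((B ×ˢ B).filter (fun p : X × X => msb d B p.1 = msb d B p.2)).filter
          (fun p => msb d B p.1 = C) = C ×ˢ C := by
        ext p
        simp only [Finset.filter_filter, Finset.mem_filter, Finset.mem_product]
        constructor
        · rintro ⟨⟨h1, h2⟩, heq, hC1⟩
          exact ⟨(mem_msb_iff d hd hBball hBcard h1 hC).mpr hC1,
            (mem_msb_iff d hd hBball hBcard h2 hC).mpr (heq ▸ hC1)⟩
        · rintro ⟨h1, h2⟩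
          have h1B := hC.2.1.subset h1
          have h2B := hC.2.1.subset h2
          have e1 := (mem_msb_iff d hd hBball hBcard h1B hC).mp h1
          have e2 := (mem_msb_iff d hd hBball hBcard h2B hC).mp h2
          exact ⟨⟨h1B, h2B⟩, e1.trans e2.symm, e1⟩
      rw [hfib, Finset.sum_product]
      unfold nu
      rw [sq, Finset.sum_mul_sum]
    simp only [ne_eq]
    rw [dnu2, ← htot, ← hsame, ← hsplit]
    ring
  rw [← Finset.sum_mul, hsum2, mul_comm]
end
end

section
/- Let X be a finite ultrametric space with positive additive measure ν, tree of balls S with maximal ball K, and T a real-valued function on non-minimal balls. Then for any point I ∈ S_min: Σ_{L ∈ S_min, L ≠ I} ν(L)·T(sup(I,L))² = Σ_{L : I < L ≤ K} (ν(L) − ν(L−1,I))·T(L)², where (L−1,I) is the maximal proper subball of L containing I. -/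
open scoped Classical
open Finset

noncomputable section

variable {X : Type*} [Fintype X] [DecidableEq X]

lemma singleton_isBall (d : X → X → ℝ) (hd : IsUltra d) (I : X) :
    IsBall d ({I} : Finset X) := by
  refine ⟨I, 0, le_refl 0, ?_⟩
  ext y
  simp only [Finset.mem_singleton, Finset.mem_filter, Finset.mem_univ, true_and]
  constructor
  · rintro rfl; exact le_of_eq ((hd.2.1 _ _).2 rfl)
  · intro h
    exact ((hd.2.1 I y).1 (le_antisymm h (hd.1 I y))).symm

lemma balls_nested (d : X → X → ℝ) (hd : IsUltra d) {B C : Finset X}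
    (hB : IsBall d B) (hC : IsBall d C) {z : X} (hzB : z ∈ B) (hzC : z ∈ C) :
    B ⊆ C ∨ C ⊆ B := by
  obtain ⟨x, r, hr, rfl⟩ := hB
  obtain ⟨y, s, hs, rfl⟩ := hC
  simp only [Finset.mem_filter, Finset.mem_univ, true_and] at hzB hzC
  rcases le_total r s with h | h
  · left
    intro w hw
    simp only [Finset.mem_filter, Finset.mem_univ, true_and] at hw ⊢
    calc d y w ≤ max (d y z) (d z w) := hd.2.2.2 y w z
      _ ≤ s := by
        refine max_le hzC ?_
        calc d z w ≤ max (d z x) (d x w) := hd.2.2.2 z w x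
          _ ≤ s := max_le (le_trans (le_of_eq (hd.2.2.1 z x)) (le_trans hzB h))
              (le_trans hw h)
  · right
    intro w hw
    simp only [Finset.mem_filter, Finset.mem_univ, true_and] at hw ⊢
    calc d x w ≤ max (d x z) (d z w) := hd.2.2.2 x w z
      _ ≤ r := by
        refine max_le hzB ?_
        calc d z w ≤ max (d z y) (d y w) := hd.2.2.2 z w y
          _ ≤ r := max_le (le_trans (le_of_eq (hd.2.2.1 z y)) (le_trans hzC h))
              (le_trans hw h)

/-- `∑_{L ∈ S_min, L ≠ I} ν(L) T(sup(I,L))² = ∑_{I < L ≤ K} (ν(L) - ν(L-1,I)) T(L)²`. -/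
theorem sum_T_squared (d : X → X → ℝ) (m : X → ℝ)
    (sb : X → X → Finset X) (pr : Finset X → Finset X → Finset X) (T : Finset X → ℝ)
    (hd : IsUltra d) (hm : ∀ x, 0 < m x) (hsb : SupSpec d sb) (hpr : PredSpec d pr)
    (I : X) :
    ∑ L ∈ Finset.univ.filter (fun L : X => L ≠ I), m L * (T (sb I L)) ^ 2
      = ∑ L ∈ Finset.univ.filter (fun L : Finset X => IsBall d L ∧ ({I} : Finset X) ⊂ L),
          (nu m L - nu m (pr L {I})) * (T L) ^ 2 := by
  classical
  have hmap : ∀ L ∈ Finset.univ.filter (fun L : X => L ≠ I),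
      sb I L ∈ Finset.univ.filter
        (fun L : Finset X => IsBall d L ∧ ({I} : Finset X) ⊂ L) := by
    intro L hL
    simp only [Finset.mem_filter, Finset.mem_univ, true_and] at hL ⊢
    obtain ⟨hball, hI, hLmem, _⟩ := hsb I L
    refine ⟨hball, ?_⟩
    refine (Finset.ssubset_iff_of_subset (by simpa using hI)).2 ⟨L, hLmem, by simp [hL]⟩
  rw [← Finset.sum_fiberwise_of_maps_to hmap]
  refine Finset.sum_congr rfl ?_
  intro B hB
  simp only [Finset.mem_filter, Finset.mem_univ, true_and] at hB
  obtain ⟨hBball, hBss⟩ := hB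
  obtain ⟨hprmax, hprsub⟩ := hpr B {I} hBball (singleton_isBall d hd I) hBss
  obtain ⟨hprball, hprss, hprmaxl⟩ := hprmax
  have hIpr : I ∈ pr B {I} := hprsub (Finset.mem_singleton_self I)
  have hset : (Finset.univ.filter (fun L : X => L ≠ I)).filter (fun L => sb I L = B)
      = B \ pr B {I} := by
    ext L
    simp only [Finset.mem_filter, Finset.mem_univ, true_and, Finset.mem_sdiff]
    constructor
    · rintro ⟨hLne, hsbL⟩
      obtain ⟨hball, hI, hLmem, hmin⟩ := hsb I L
      refine ⟨hsbL ▸ hLmem, ?_⟩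
      intro hLpr
      have : sb I L ⊆ pr B {I} := hmin _ hprball hIpr hLpr
      rw [hsbL] at this
      exact absurd (lt_of_le_of_lt this hprss) (lt_irrefl B)
    · rintro ⟨hLB, hLpr⟩
      obtain ⟨hball, hI, hLmem, hmin⟩ := hsb I L
      have hLne : L ≠ I := fun h => hLpr (h ▸ hIpr)
      refine ⟨hLne, ?_⟩
      have hsub : sb I L ⊆ B := hmin B hBball (hBss.subset (Finset.mem_singleton_self I)) hLB
      rcases eq_or_ne (sb I L) B with h | h
      · exact h
      · exfalso
        have hss : sb I L ⊂ B := ⟨hsub, fun h2 => h (le_antisymm hsub h2)⟩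
        rcases balls_nested d hd hball hprball hI hIpr with h1 | h1
        · exact hLpr (h1 hLmem)
        · have := hprmaxl (sb I L) hball h1 hss
          exact hLpr (this ▸ hLmem)
  rw [hset]
  have : ∀ L ∈ B \ pr B {I}, m L * (T (sb I L)) ^ 2 = m L * (T B) ^ 2 := by
    intro L hL
    have : L ∈ (Finset.univ.filter (fun L : X => L ≠ I)).filter (fun L => sb I L = B) := by
      rw [hset]; exact hL
    simp only [Finset.mem_filter] at this
    rw [this.2]
  rw [Finset.sum_congr rfl this, ← Finset.sum_mul]
  congr 1
  rw [Finset.sum_sdiff_eq_sub hprss.subset]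
  rfl
end
end

section
/- Let X be a finite ultrametric space with positive additive measure ν, tree of balls S with maximal ball K, and T : S \ S_min → ℝ. Define the replica matrix Q indexed by points: Q_{IJ} = √(ν(I)ν(J))·T(sup(I,J)) for I ≠ J, and Q_{II} = 0. Then tr(Q³) = Σ_{A,B,C ∈ S_min pairwise distinct} ν(A)ν(B)ν(C)·T(sup(A,B))·T(sup(B,C))·T(sup(C,A)) = Σ_{B ∈ S \ S_min} T(B)³·(3ν(B)·Δν²(B) − 2Δν³(B)) + 3·Σ_{B ∈ S \ S_min} Δν²(B)·Σ_{L : B < L ≤ K} (ν(L) − ν(L−1,B))·T(L)²·T(B). -/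
open scoped Classical
open Finset

noncomputable section

variable {X : Type*} [Fintype X] [DecidableEq X]

namespace TraceAux
set_option linter.unusedSectionVars false

variable {X : Type*} [Fintype X] [DecidableEq X]

/-- The diameter of a finite set (0 for the empty set). -/
def diam (d : X → X → ℝ) (B : Finset X) : ℝ :=
  (insert (0:ℝ) ((B ×ˢ B).image fun p => d p.1 p.2)).max' (insert_nonempty _ _)

variable {d : X → X → ℝ} {m : X → ℝ} {sb : X → X → Finset X}
  {pr : Finset X → Finset X → Finset X}

lemma dist_le_diam {B : Finset X} {x y : X} (hx : x ∈ B) (hy : y ∈ B) :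
    d x y ≤ diam d B := by
  unfold diam
  exact le_max' (insert (0:ℝ) ((B ×ˢ B).image fun p => d p.1 p.2)) _
    (mem_insert_of_mem (mem_image.2 ⟨(x, y), mem_product.2 ⟨hx, hy⟩, rfl⟩))

lemma diam_nonneg (B : Finset X) : (0:ℝ) ≤ diam d B := by
  unfold diam
  exact le_max' (insert (0:ℝ) ((B ×ˢ B).image fun p => d p.1 p.2)) (0:ℝ) (mem_insert_self _ _)

section Ultra

variable (hd : IsUltra d)
include hd

lemma dself (x : X) : d x x = 0 := (hd.2.1 x x).2 rfl

lemma dsymm (x y : X) : d x y = d y x := hd.2.2.1 x y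

lemma dpos {x y : X} (h : x ≠ y) : 0 < d x y :=
  lt_of_le_of_ne (hd.1 x y) (fun h0 => h ((hd.2.1 x y).1 h0.symm))

lemma dtri (x y z : X) : d x y ≤ max (d x z) (d z y) := hd.2.2.2 x y z

lemma exists_diam {B : Finset X} (h : B.Nonempty) :
    ∃ u ∈ B, ∃ v ∈ B, diam d B = d u v := by
  have hm := max'_mem (insert (0:ℝ) ((B ×ˢ B).image fun p => d p.1 p.2))
    (insert_nonempty _ _)
  rw [mem_insert] at hm
  rcases hm with h0 | hmem
  · obtain ⟨x, hx⟩ := h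
    exact ⟨x, hx, x, hx, by unfold diam; rw [h0, dself hd]⟩
  · obtain ⟨p, hp, he⟩ := mem_image.1 hmem
    exact ⟨p.1, (mem_product.1 hp).1, p.2, (mem_product.1 hp).2, he.symm⟩

lemma diam_pos {B : Finset X} (h2 : 1 < B.card) : 0 < diam d B := by
  obtain ⟨x, hx, y, hy, hxy⟩ := Finset.one_lt_card.1 h2
  exact lt_of_lt_of_le (dpos hd hxy) (dist_le_diam hx hy)

lemma ball_nonempty {B : Finset X} (hB : IsBall d B) : B.Nonempty := by
  obtain ⟨c, r, hr, rfl⟩ := hB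
  exact ⟨c, mem_filter.2 ⟨mem_univ _, by rw [dself hd]; exact hr⟩⟩

lemma diam_le_rad {c : X} {r : ℝ} :
    diam d (Finset.univ.filter (fun y => d c y ≤ r)) ≤ r ∨
      (Finset.univ.filter (fun y => d c y ≤ r)) = ∅ := by
  by_cases hr : (0:ℝ) ≤ r
  · left
    unfold diam
    apply max'_le
    intro w hw
    rcases mem_insert.1 hw with h0 | hmem
    · exact h0 ▸ hr
    · obtain ⟨p, hp, he⟩ := mem_image.1 hmem
      have h1 := (mem_filter.1 (mem_product.1 hp).1).2
      have h2 := (mem_filter.1 (mem_product.1 hp).2).2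
      calc w = d p.1 p.2 := he.symm
        _ ≤ max (d p.1 c) (d c p.2) := dtri hd _ _ _
        _ ≤ r := max_le (by rw [← dsymm hd]; exact h1) h2
  · right
    ext y
    simp only [mem_filter, mem_univ, true_and, Finset.notMem_empty, iff_false]
    intro hy
    exact hr (le_trans (hd.1 c y) hy)

lemma mem_ball_of_le_diam {B : Finset X} {x z : X} (hB : IsBall d B) (hx : x ∈ B)
    (hz : d x z ≤ diam d B) : z ∈ B := by
  obtain ⟨c, r, hr, rfl⟩ := hB
  rcases diam_le_rad hd (c := c) (r := r) with hle | hemp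
  · have hcx := (mem_filter.1 hx).2
    refine mem_filter.2 ⟨mem_univ _, ?_⟩
    calc d c z ≤ max (d c x) (d x z) := dtri hd _ _ _
      _ ≤ r := max_le hcx (le_trans hz hle)
  · rw [hemp] at hx; exact absurd hx (Finset.notMem_empty _)

variable (hsb : SupSpec d sb)
include hsb

lemma sb_eq (x y : X) : sb x y = Finset.univ.filter (fun z => d x z ≤ d x y) := by
  obtain ⟨hball, hx, hy, hmin⟩ := hsb x y
  apply Finset.Subset.antisymm
  · refine hmin _ ⟨x, d x y, hd.1 x y, rfl⟩ ?_ ?_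
    · exact mem_filter.2 ⟨mem_univ _, by rw [dself hd]; exact hd.1 x y⟩
    · exact mem_filter.2 ⟨mem_univ _, le_refl _⟩
  · intro z hz
    have hz' : d x z ≤ d x y := (mem_filter.1 hz).2
    exact mem_ball_of_le_diam hd hball hx (le_trans hz' (dist_le_diam hx hy))

lemma mem_sb {x y z : X} : z ∈ sb x y ↔ d x z ≤ d x y := by
  rw [sb_eq hd hsb]; simp

lemma sb_symm (x y : X) : sb x y = sb y x := by
  ext z
  rw [mem_sb hd hsb, mem_sb hd hsb]
  constructor
  · intro h
    calc d y z ≤ max (d y x) (d x z) := dtri hd _ _ _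
      _ ≤ d y x := max_le (le_refl _) (by rw [← dsymm hd x y]; exact h)
  · intro h
    calc d x z ≤ max (d x y) (d y z) := dtri hd _ _ _
      _ ≤ d x y := max_le (le_refl _) (by rw [dsymm hd x y]; exact h)

lemma sb_self (x : X) : sb x x = {x} := by
  ext z
  rw [mem_sb hd hsb, dself hd, Finset.mem_singleton]
  constructor
  · intro h
    exact ((hd.2.1 x z).1 (le_antisymm h (hd.1 x z))).symm
  · rintro rfl
    rw [dself hd]

lemma diam_sb (x y : X) : diam d (sb x y) = d x y := by
  obtain ⟨_, hx, hy, _⟩ := hsb x y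
  refine le_antisymm ?_ (dist_le_diam hx hy)
  unfold diam
  apply max'_le
  intro w hw
  rcases mem_insert.1 hw with h0 | hmem
  · exact h0 ▸ hd.1 x y
  · obtain ⟨p, hp, he⟩ := mem_image.1 hmem
    have h1 := (mem_sb hd hsb).1 (mem_product.1 hp).1
    have h2 := (mem_sb hd hsb).1 (mem_product.1 hp).2
    calc w = d p.1 p.2 := he.symm
      _ ≤ max (d p.1 x) (d x p.2) := dtri hd _ _ _
      _ ≤ d x y := max_le (by rw [← dsymm hd]; exact h1) h2

lemma sb_card {x y : X} (h : x ≠ y) : 1 < (sb x y).card :=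
  Finset.one_lt_card.2 ⟨x, (hsb x y).2.1, y, (hsb x y).2.2.1, h⟩

lemma sb_congr {x y z : X} (h : d x y = d x z) : sb x y = sb x z := by
  rw [sb_eq hd hsb, sb_eq hd hsb, h]

omit hsb

omit hd in
/-- The class of `x` in `B`: points at distance `< diam B`. -/
lemma mem_cls {B : Finset X} {x z : X} :
    z ∈ B.filter (fun w => d x w < diam d B) ↔ z ∈ B ∧ d x z < diam d B :=
  mem_filter

lemma mem_cls_self {B : Finset X} {x : X} (h2 : 1 < B.card) (hx : x ∈ B) :
    x ∈ B.filter (fun w => d x w < diam d B) :=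
  mem_filter.2 ⟨hx, by rw [dself hd]; exact diam_pos hd h2⟩

lemma cls_eq_of_mem {B : Finset X} {x y : X}
    (hy : y ∈ B.filter (fun w => d x w < diam d B)) :
    B.filter (fun w => d x w < diam d B) = B.filter (fun w => d y w < diam d B) := by
  have hxy : d x y < diam d B := (mem_filter.1 hy).2
  ext z
  simp only [mem_filter, and_congr_right_iff]
  intro _
  constructor
  · intro h
    calc d y z ≤ max (d y x) (d x z) := dtri hd _ _ _
      _ < diam d B := max_lt (by rw [← dsymm hd]; exact hxy) h
  · intro h
    calc d x z ≤ max (d x y) (d y z) := dtri hd _ _ _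
      _ < diam d B := max_lt hxy h

lemma subball_dist_lt {L D : Finset X} (hL : IsBall d L) (hD : IsBall d D)
    (hsub : D ⊆ L) (hne : ¬ L ⊆ D) {u v : X} (hu : u ∈ D) (hv : v ∈ D) :
    d u v < diam d L := by
  rcases lt_or_eq_of_le (dist_le_diam (hsub hu) (hsub hv)) with h | h
  · exact h
  · exfalso
    apply hne
    obtain ⟨c, r, hr, rfl⟩ := hD
    intro w hw
    have hcu : d c u ≤ r := (mem_filter.1 hu).2
    have hcv : d c v ≤ r := (mem_filter.1 hv).2
    refine mem_filter.2 ⟨mem_univ _, ?_⟩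
    have huw : d u w ≤ diam d L := dist_le_diam (hsub hu) hw
    rw [← h] at huw
    have huv : d u v ≤ r :=
      le_trans (dtri hd u v c) (max_le (by rw [dsymm hd]; exact hcu) hcv)
    calc d c w ≤ max (d c u) (d u w) := dtri hd _ _ _
      _ ≤ r := max_le hcu (le_trans huw huv)

lemma cls_ball {B : Finset X} (hB : IsBall d B) (h2 : 1 < B.card) {x : X} (hx : x ∈ B) :
    IsBall d (B.filter (fun w => d x w < diam d B)) := by
  have hN : (B.filter (fun w => d x w < diam d B)).Nonempty := ⟨x, mem_cls_self hd h2 hx⟩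
  set C := B.filter (fun w => d x w < diam d B) with hC
  refine ⟨x, C.sup' hN (fun z => d x z), ?_, ?_⟩
  · exact le_trans (le_of_eq (dself hd x).symm) (le_sup' _ (mem_cls_self hd h2 hx))
  · have hlt : C.sup' hN (fun z => d x z) < diam d B :=
      (Finset.sup'_lt_iff hN).2 (fun z hz => (mem_filter.1 hz).2)
    ext z
    simp only [mem_filter, mem_univ, true_and]
    constructor
    · intro hz
      exact le_sup' _ hz
    · intro hz
      rw [hC]
      refine mem_filter.2 ⟨?_, lt_of_le_of_lt hz hlt⟩
      exact mem_ball_of_le_diam hd hB hx (le_of_lt (lt_of_le_of_lt hz hlt))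

lemma cls_ssub {B : Finset X} (hB : IsBall d B) (h2 : 1 < B.card) {x : X} (hx : x ∈ B) :
    (B.filter (fun w => d x w < diam d B)) ⊂ B := by
  refine (Finset.ssubset_iff_of_subset (filter_subset _ _)).2 ?_
  obtain ⟨u, hu, v, hv, huv⟩ := exists_diam hd (Finset.card_pos.1 (lt_trans one_pos h2))
  by_cases hcu : u ∈ B.filter (fun w => d x w < diam d B)
  · refine ⟨v, hv, fun hcv => ?_⟩
    have : d u v < diam d B :=
      calc d u v ≤ max (d u x) (d x v) := dtri hd _ _ _
        _ < diam d B := max_lt (by rw [dsymm hd]; exact (mem_filter.1 hcu).2)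
            (mem_filter.1 hcv).2
    rw [← huv] at this
    exact lt_irrefl _ this
  · exact ⟨u, hu, hcu⟩

lemma maxSub_iff {B C : Finset X} (hB : IsBall d B) (h2 : 1 < B.card) :
    MaxSub d B C ↔ ∃ x ∈ B, C = B.filter (fun w => d x w < diam d B) := by
  constructor
  · rintro ⟨hCb, hCB, hmax⟩
    obtain ⟨x, hxC⟩ := ball_nonempty hd hCb
    have hxB : x ∈ B := hCB.subset hxC
    have hCsub : C ⊆ B.filter (fun w => d x w < diam d B) := by
      intro z hz
      exact mem_filter.2 ⟨hCB.subset hz,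
        subball_dist_lt hd hB hCb hCB.subset hCB.2 hxC hz⟩
    exact ⟨x, hxB, (hmax _ (cls_ball hd hB h2 hxB) hCsub (cls_ssub hd hB h2 hxB)).symm⟩
  · rintro ⟨x, hx, rfl⟩
    refine ⟨cls_ball hd hB h2 hx, cls_ssub hd hB h2 hx, ?_⟩
    intro D hD hsubD hDB
    have hxD : x ∈ D := hsubD (mem_cls_self hd h2 hx)
    refine Finset.Subset.antisymm ?_ hsubD
    intro z hz
    exact mem_filter.2 ⟨hDB.subset hz,
      subball_dist_lt hd hB hD hDB.subset hDB.2 hxD hz⟩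

lemma maxSub_filter_eq {B : Finset X} (hB : IsBall d B) (h2 : 1 < B.card) :
    Finset.univ.filter (MaxSub d B) = B.image (fun x => B.filter (fun w => d x w < diam d B)) := by
  ext C
  simp only [mem_filter, mem_univ, true_and, mem_image]
  rw [maxSub_iff hd hB h2]
  constructor
  · rintro ⟨x, hx, h⟩; exact ⟨x, hx, h.symm⟩
  · rintro ⟨x, hx, h⟩; exact ⟨x, hx, h.symm⟩

lemma pr_eq {L B : Finset X} {x : X} (hpr : PredSpec d pr) (hL : IsBall d L)
    (hB : IsBall d B) (hBL : B ⊂ L) (hx : x ∈ B) :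
    pr L B = L.filter (fun w => d x w < diam d L) := by
  obtain ⟨hms, hsub⟩ := hpr L B hL hB hBL
  obtain ⟨w, hwL, hwB⟩ := Finset.exists_of_ssubset hBL
  have h2 : 1 < L.card :=
    Finset.one_lt_card.2 ⟨x, hBL.subset hx, w, hwL, fun h => hwB (h ▸ hx)⟩
  obtain ⟨u, huL, hcu⟩ := (maxSub_iff hd hL h2).1 hms
  have hxc : x ∈ L.filter (fun v => d u v < diam d L) := hcu ▸ hsub hx
  rw [hcu, cls_eq_of_mem hd hxc]


/-- The class of `x` in `B`. -/
lemma cl_def' : True := trivial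

end Ultra

/-- The class of `x` in `B`: points of `B` at distance `< diam B` from `x`. -/
def cl (d : X → X → ℝ) (B : Finset X) (x : X) : Finset X :=
  B.filter fun w => d x w < diam d B

lemma mem_cl {B : Finset X} {x z : X} :
    z ∈ cl d B x ↔ z ∈ B ∧ d x z < diam d B := mem_filter

lemma cl_subset {B : Finset X} {x : X} : cl d B x ⊆ B := filter_subset _ _

section Ultra2

variable (hd : IsUltra d)
include hd

lemma mem_cl_self {B : Finset X} {x : X} (h2 : 1 < B.card) (hx : x ∈ B) :
    x ∈ cl d B x := mem_cls_self hd h2 hx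

lemma cl_eq_of_mem {B : Finset X} {x y : X} (hy : y ∈ cl d B x) :
    cl d B x = cl d B y := cls_eq_of_mem hd hy

lemma cl_comm {B : Finset X} {x z : X} (hx : x ∈ B) (hz : z ∈ B) :
    z ∈ cl d B x ↔ x ∈ cl d B z := by
  rw [mem_cl, mem_cl, dsymm hd x z]
  simp [hx, hz]

lemma cl_disjoint {B : Finset X} {x y : X} (hx : x ∈ B) (hy : y ∈ B)
    (hne : y ∉ cl d B x) : Disjoint (cl d B x) (cl d B y) := by
  rw [Finset.disjoint_left]
  intro z hzx hzy
  apply hne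
  refine mem_cl.2 ⟨hy, ?_⟩
  calc d x y ≤ max (d x z) (d z y) := dtri hd _ _ _
    _ < diam d B := max_lt (mem_cl.1 hzx).2 (by rw [← dsymm hd]; exact (mem_cl.1 hzy).2)

lemma maxSub_filter_eq' {B : Finset X} (hB : IsBall d B) (h2 : 1 < B.card) :
    Finset.univ.filter (MaxSub d B) = B.image (cl d B) :=
  maxSub_filter_eq hd hB h2

lemma pr_eq' {L B : Finset X} {x : X} (hpr : PredSpec d pr) (hL : IsBall d L)
    (hB : IsBall d B) (hBL : B ⊂ L) (hx : x ∈ B) :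
    pr L B = cl d L x := pr_eq hd hpr hL hB hBL hx

lemma filter_cl_eq {B : Finset X} (h2 : 1 < B.card) {c : X} (hc : c ∈ B) :
    B.filter (fun x => cl d B x = cl d B c) = cl d B c := by
  ext z
  simp only [mem_filter]
  constructor
  · rintro ⟨hz, he⟩
    exact he ▸ mem_cl_self hd h2 hz
  · intro hz
    exact ⟨cl_subset hz, (cl_eq_of_mem hd hz).symm⟩

variable {m : X → ℝ}

lemma sum_classes_pow {B : Finset X} (hB : IsBall d B) (h2 : 1 < B.card) (k : ℕ) :
    ∑ C ∈ Finset.univ.filter (MaxSub d B), nu m C ^ (k + 1)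
      = ∑ x ∈ B, m x * nu m (cl d B x) ^ k := by
  rw [maxSub_filter_eq' hd hB h2]
  refine Finset.sum_image' _ (fun c hc => ?_)
  rw [filter_cl_eq hd h2 hc]
  rw [Finset.sum_congr rfl (fun x hx => by rw [← cl_eq_of_mem hd hx])]
  rw [← Finset.sum_mul]
  have : ∑ x ∈ cl d B c, m x = nu m (cl d B c) := rfl
  rw [this, ← pow_succ']

lemma dnu2_cl {B : Finset X} (hB : IsBall d B) (h2 : 1 < B.card) :
    dnu2 d m B = nu m B ^ 2 - ∑ x ∈ B, m x * nu m (cl d B x) := by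
  rw [dnu2, sum_classes_pow hd hB h2 1]
  simp [pow_one]

lemma dnu3_cl {B : Finset X} (hB : IsBall d B) (h2 : 1 < B.card) :
    dnu3 d m B = nu m B ^ 3 - ∑ x ∈ B, m x * nu m (cl d B x) ^ 2 := by
  rw [dnu3, sum_classes_pow hd hB h2 2]

omit hd in
lemma sum_notMem {B s : Finset X} (hs : s ⊆ B) (g : X → ℝ) :
    ∑ y ∈ B, (if y ∉ s then g y else 0) = (∑ y ∈ B, g y) - ∑ y ∈ s, g y := by
  rw [← Finset.sum_filter, ← Finset.sdiff_eq_filter, Finset.sum_sdiff_eq_sub hs]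

omit hd in
lemma sum_notMem_two {B s t : Finset X} (hs : s ⊆ B) (ht : t ⊆ B)
    (hdisj : Disjoint s t) (g : X → ℝ) :
    ∑ y ∈ B, (if y ∉ s ∧ y ∉ t then g y else 0)
      = (∑ y ∈ B, g y) - ∑ y ∈ s, g y - ∑ y ∈ t, g y := by
  have h1 : ∀ y, (y ∉ s ∧ y ∉ t) ↔ y ∉ s ∪ t := by
    intro y; rw [Finset.mem_union]; tauto
  rw [Finset.sum_congr rfl (fun y _ => by rw [if_congr (h1 y) rfl rfl])]
  rw [sum_notMem (Finset.union_subset hs ht) g, Finset.sum_union hdisj]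
  ring

end Ultra2

section Main

variable {m : X → ℝ}
variable (hd : IsUltra d) (hsb : SupSpec d sb)
include hd hsb

lemma sb_eq_ball_iff {B : Finset X} (hB : IsBall d B) (h2 : 1 < B.card) {x y : X} :
    sb x y = B ↔ x ∈ B ∧ y ∈ B ∧ y ∉ cl d B x := by
  constructor
  · rintro rfl
    refine ⟨(hsb x y).2.1, (hsb x y).2.2.1, fun hcl => ?_⟩
    have h := (mem_cl.1 hcl).2
    rw [diam_sb hd hsb] at h
    exact lt_irrefl _ h
  · rintro ⟨hx, hy, hncl⟩
    have hdxy : d x y = diam d B :=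
      le_antisymm (dist_le_diam hx hy) (not_lt.1 fun h => hncl (mem_cl.2 ⟨hy, h⟩))
    refine Finset.Subset.antisymm ((hsb x y).2.2.2 B hB hx hy) ?_
    intro z hz
    exact (mem_sb hd hsb).2 (hdxy ▸ dist_le_diam hx hz)

lemma dnu2_pairs {B : Finset X} (hB : IsBall d B) (h2 : 1 < B.card) :
    dnu2 d m B = ∑ x : X, ∑ y : X, (if sb x y = B then m x * m y else 0) := by
  have hstep : ∀ x : X, (∑ y : X, if sb x y = B then m x * m y else 0)
      = if x ∈ B then m x * (nu m B - nu m (cl d B x)) else 0 := by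
    intro x
    by_cases hx : x ∈ B
    · rw [if_pos hx]
      have h1 : ∀ y : X, (if sb x y = B then m x * m y else 0)
          = if y ∈ B then (if y ∉ cl d B x then m x * m y else 0) else 0 := by
        intro y
        by_cases hy : y ∈ B
        · rw [if_pos hy]
          by_cases hc : y ∉ cl d B x
          · rw [if_pos ((sb_eq_ball_iff hd hsb hB h2).2 ⟨hx, hy, hc⟩), if_pos hc]
          · rw [if_neg (fun h => hc ((sb_eq_ball_iff hd hsb hB h2).1 h).2.2), if_neg hc]
        · rw [if_neg hy, if_neg (fun h => hy ((sb_eq_ball_iff hd hsb hB h2).1 h).2.1)]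
      rw [Finset.sum_congr rfl (fun y _ => h1 y), Finset.sum_ite_mem, Finset.univ_inter,
        sum_notMem cl_subset (fun y => m x * m y), ← Finset.mul_sum, ← Finset.mul_sum,
        ← mul_sub]
      rfl
    · rw [if_neg hx]
      exact Finset.sum_eq_zero fun y _ =>
        if_neg (fun h => hx ((sb_eq_ball_iff hd hsb hB h2).1 h).1)
  rw [Finset.sum_congr rfl (fun x _ => hstep x), Finset.sum_ite_mem, Finset.univ_inter,
    dnu2_cl hd hB h2]
  rw [Finset.sum_congr rfl (fun x _ => mul_sub (m x) (nu m B) (nu m (cl d B x))),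
    Finset.sum_sub_distrib, ← Finset.sum_mul]
  have hnu : (∑ x ∈ B, m x) = nu m B := rfl
  rw [hnu]
  ring

lemma zsum {B L : Finset X} {x y : X} (hpr : PredSpec d pr) (hB : IsBall d B)
    (h2 : 1 < B.card) (hL : IsBall d L) (hBL : B ⊂ L) (hxy : sb x y = B) :
    ∑ z : X, (if sb y z = L ∧ sb z x = L then m z else 0)
      = nu m L - nu m (pr L B) := by
  have hx : x ∈ B := ((sb_eq_ball_iff hd hsb hB h2).1 hxy).1
  have hy : y ∈ B := ((sb_eq_ball_iff hd hsb hB h2).1 hxy).2.1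
  have h2L : 1 < L.card := lt_of_lt_of_le h2 (Finset.card_le_card hBL.subset)
  have hxL : x ∈ L := hBL.subset hx
  have hyL : y ∈ L := hBL.subset hy
  have hprx : pr L B = cl d L x := pr_eq' hd hpr hL hB hBL hx
  have hycl : y ∈ cl d L x := by
    have h := (hpr L B hL hB hBL).2 hy
    rwa [hprx] at h
  have hcond : ∀ z : X, (sb y z = L ∧ sb z x = L) ↔ (z ∈ L ∧ z ∉ cl d L x) := by
    intro z
    constructor
    · rintro ⟨h1, h2'⟩
      have hz := ((sb_eq_ball_iff hd hsb hL h2L).1 h2').1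
      have hxcl := ((sb_eq_ball_iff hd hsb hL h2L).1 h2').2.2
      exact ⟨hz, fun hc => hxcl ((cl_comm hd hxL hz).1 hc)⟩
    · rintro ⟨hz, hzc⟩
      constructor
      · refine (sb_eq_ball_iff hd hsb hL h2L).2 ⟨hyL, hz, fun hc => hzc ?_⟩
        rw [cl_eq_of_mem hd hycl]
        exact hc
      · exact (sb_eq_ball_iff hd hsb hL h2L).2
          ⟨hz, hxL, fun hc => hzc ((cl_comm hd hz hxL).1 hc)⟩
  rw [Finset.sum_congr rfl (fun z _ => if_congr (hcond z) rfl rfl)]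
  have hsplit : ∀ z : X, (if z ∈ L ∧ z ∉ cl d L x then m z else 0)
      = if z ∈ L then (if z ∉ cl d L x then m z else 0) else 0 := by
    intro z
    by_cases hz : z ∈ L <;> by_cases hc : z ∉ cl d L x <;> simp [hz, hc]
  rw [Finset.sum_congr rfl (fun z _ => hsplit z), Finset.sum_ite_mem, Finset.univ_inter,
    sum_notMem cl_subset m, hprx]
  rfl

lemma pairBL {B L : Finset X} (hpr : PredSpec d pr) (hB : IsBall d B)
    (h2 : 1 < B.card) (hL : IsBall d L) (hBL : B ⊂ L) :
    ∑ x : X, ∑ y : X, ∑ z : X,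
        (if sb x y = B ∧ sb y z = L ∧ sb z x = L then m x * m y * m z else 0)
      = dnu2 d m B * (nu m L - nu m (pr L B)) := by
  have hstep : ∀ x y : X,
      (∑ z : X, if sb x y = B ∧ sb y z = L ∧ sb z x = L then m x * m y * m z else 0)
        = (if sb x y = B then m x * m y else 0) * (nu m L - nu m (pr L B)) := by
    intro x y
    by_cases hxy : sb x y = B
    · rw [if_pos hxy, ← zsum hd hsb hpr hB h2 hL hBL hxy, Finset.mul_sum]
      refine Finset.sum_congr rfl fun z _ => ?_
      by_cases hc : sb y z = L ∧ sb z x = L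
      · rw [if_pos ⟨hxy, hc.1, hc.2⟩, if_pos hc]
      · rw [if_neg (fun h => hc ⟨h.2.1, h.2.2⟩), if_neg hc, mul_zero]
    · rw [if_neg hxy, Finset.sum_eq_zero fun z _ => if_neg (fun h => hxy h.1), zero_mul]
  rw [Finset.sum_congr rfl (fun x _ => Finset.sum_congr rfl (fun y _ => hstep x y))]
  rw [Finset.sum_congr rfl (fun x _ => (Finset.sum_mul _ _ _).symm), ← Finset.sum_mul,
    ← dnu2_pairs hd hsb hB h2]

lemma tripleB {B : Finset X} (hB : IsBall d B) (h2 : 1 < B.card) :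
    ∑ x : X, ∑ y : X, ∑ z : X,
        (if sb x y = B ∧ sb y z = B ∧ sb z x = B then m x * m y * m z else 0)
      = 3 * nu m B * dnu2 d m B - 2 * dnu3 d m B := by
  have hiff : ∀ x y : X, sb x y = B ↔ x ∈ B ∧ y ∈ B ∧ y ∉ cl d B x :=
    fun x y => sb_eq_ball_iff hd hsb hB h2
  have hZ : ∀ x y : X, x ∈ B → y ∈ B → y ∉ cl d B x →
      (∑ z : X, if sb y z = B ∧ sb z x = B then m z else 0)
        = nu m B - nu m (cl d B y) - nu m (cl d B x) := by
    intro x y hx hy hyc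
    have hcond : ∀ z : X, (sb y z = B ∧ sb z x = B)
        ↔ (z ∈ B ∧ (z ∉ cl d B y ∧ z ∉ cl d B x)) := by
      intro z
      constructor
      · rintro ⟨ha, hb⟩
        obtain ⟨-, hz, hnc⟩ := (hiff y z).1 ha
        obtain ⟨-, -, hxnc⟩ := (hiff z x).1 hb
        exact ⟨hz, hnc, fun hc => hxnc ((cl_comm hd hx hz).1 hc)⟩
      · rintro ⟨hz, hzy, hzx⟩
        exact ⟨(hiff y z).2 ⟨hy, hz, hzy⟩,
          (hiff z x).2 ⟨hz, hx, fun hc => hzx ((cl_comm hd hz hx).1 hc)⟩⟩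
    rw [Finset.sum_congr rfl (fun z _ => if_congr (hcond z) rfl rfl)]
    have hsplit : ∀ z : X, (if z ∈ B ∧ (z ∉ cl d B y ∧ z ∉ cl d B x) then m z else 0)
        = if z ∈ B then (if z ∉ cl d B y ∧ z ∉ cl d B x then m z else 0) else 0 := by
      intro z
      by_cases hz : z ∈ B <;> simp [hz]
    rw [Finset.sum_congr rfl (fun z _ => hsplit z), Finset.sum_ite_mem, Finset.univ_inter,
      sum_notMem_two cl_subset cl_subset (cl_disjoint hd hx hy hyc).symm m]
    rfl
  have hclval : ∀ x ∈ B, ∀ y ∈ cl d B x, nu m (cl d B y) = nu m (cl d B x) :=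
    fun x _ y hy => by rw [← cl_eq_of_mem hd hy]
  have hM : ∀ x : X, x ∈ B →
      (∑ y : X, if sb x y = B then
          m y * (nu m B - nu m (cl d B y) - nu m (cl d B x)) else 0)
        = nu m B ^ 2 - (∑ w ∈ B, m w * nu m (cl d B w))
          - 2 * nu m B * nu m (cl d B x) + 2 * nu m (cl d B x) ^ 2 := by
    intro x hx
    have h1 : ∀ y : X,
        (if sb x y = B then m y * (nu m B - nu m (cl d B y) - nu m (cl d B x)) else 0)
          = if y ∈ B then (if y ∉ cl d B x then
              m y * (nu m B - nu m (cl d B y) - nu m (cl d B x)) else 0) else 0 := by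
      intro y
      by_cases hy : y ∈ B
      · rw [if_pos hy]
        by_cases hc : y ∉ cl d B x
        · rw [if_pos ((hiff x y).2 ⟨hx, hy, hc⟩), if_pos hc]
        · rw [if_neg (fun h => hc ((hiff x y).1 h).2.2), if_neg hc]
      · rw [if_neg hy, if_neg (fun h => hy ((hiff x y).1 h).2.1)]
    rw [Finset.sum_congr rfl (fun y _ => h1 y), Finset.sum_ite_mem, Finset.univ_inter,
      sum_notMem cl_subset _]
    have hBg : ∑ y ∈ B, m y * (nu m B - nu m (cl d B y) - nu m (cl d B x))
        = nu m B * nu m B - (∑ w ∈ B, m w * nu m (cl d B w))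
          - nu m (cl d B x) * nu m B := by
      have e : ∀ y ∈ B, m y * (nu m B - nu m (cl d B y) - nu m (cl d B x))
          = m y * nu m B - m y * nu m (cl d B y) - nu m (cl d B x) * m y :=
        fun y _ => by ring
      rw [Finset.sum_congr rfl e, Finset.sum_sub_distrib, Finset.sum_sub_distrib,
        ← Finset.sum_mul, ← Finset.mul_sum]
      have hn : (∑ y ∈ B, m y) = nu m B := rfl
      rw [hn]
    have hCg : ∑ y ∈ cl d B x, m y * (nu m B - nu m (cl d B y) - nu m (cl d B x))
        = nu m (cl d B x) * (nu m B - 2 * nu m (cl d B x)) := by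
      have e : ∀ y ∈ cl d B x, m y * (nu m B - nu m (cl d B y) - nu m (cl d B x))
          = m y * (nu m B - 2 * nu m (cl d B x)) := fun y hy => by
        rw [hclval x hx y hy]; ring
      rw [Finset.sum_congr rfl e, ← Finset.sum_mul]
      have hn : (∑ y ∈ cl d B x, m y) = nu m (cl d B x) := rfl
      rw [hn]
    rw [hBg, hCg]
    ring
  have hstep : ∀ x y : X,
      (∑ z : X, if sb x y = B ∧ sb y z = B ∧ sb z x = B then m x * m y * m z else 0)
        = m x * (if sb x y = B then
            m y * (nu m B - nu m (cl d B y) - nu m (cl d B x)) else 0) := by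
    intro x y
    by_cases hxy : sb x y = B
    · obtain ⟨hx, hy, hyc⟩ := (hiff x y).1 hxy
      have hsum : (∑ z : X, if sb x y = B ∧ sb y z = B ∧ sb z x = B
            then m x * m y * m z else 0)
          = m x * m y * ∑ z : X, (if sb y z = B ∧ sb z x = B then m z else 0) := by
        rw [Finset.mul_sum]
        refine Finset.sum_congr rfl fun z _ => ?_
        by_cases hc : sb y z = B ∧ sb z x = B
        · rw [if_pos ⟨hxy, hc.1, hc.2⟩, if_pos hc]
        · rw [if_neg (fun h => hc ⟨h.2.1, h.2.2⟩), if_neg hc, mul_zero]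
      rw [hsum, hZ x y hx hy hyc, if_pos hxy]
      ring
    · rw [if_neg hxy, mul_zero,
        Finset.sum_eq_zero fun z _ => if_neg (fun h => hxy h.1)]
  rw [Finset.sum_congr rfl (fun x _ => Finset.sum_congr rfl (fun y _ => hstep x y))]
  have houter : ∀ x : X,
      (∑ y : X, m x * (if sb x y = B then
          m y * (nu m B - nu m (cl d B y) - nu m (cl d B x)) else 0))
        = if x ∈ B then m x * (nu m B ^ 2 - (∑ w ∈ B, m w * nu m (cl d B w))
            - 2 * nu m B * nu m (cl d B x) + 2 * nu m (cl d B x) ^ 2) else 0 := by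
    intro x
    rw [← Finset.mul_sum]
    by_cases hx : x ∈ B
    · rw [if_pos hx, hM x hx]
    · rw [if_neg hx,
        Finset.sum_eq_zero (fun y _ => if_neg (fun h => hx ((hiff x y).1 h).1)), mul_zero]
  rw [Finset.sum_congr rfl (fun x _ => houter x), Finset.sum_ite_mem, Finset.univ_inter]
  have expand : ∀ x ∈ B,
      m x * (nu m B ^ 2 - (∑ w ∈ B, m w * nu m (cl d B w))
          - 2 * nu m B * nu m (cl d B x) + 2 * nu m (cl d B x) ^ 2)
        = (nu m B ^ 2 - (∑ w ∈ B, m w * nu m (cl d B w))) * m x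
          - (2 * nu m B) * (m x * nu m (cl d B x))
          + 2 * (m x * nu m (cl d B x) ^ 2) := fun x _ => by ring
  rw [Finset.sum_congr rfl expand, Finset.sum_add_distrib, Finset.sum_sub_distrib,
    ← Finset.mul_sum, ← Finset.mul_sum, ← Finset.mul_sum,
    dnu2_cl hd hB h2, dnu3_cl hd hB h2]

  have hn : (∑ x ∈ B, m x) = nu m B := rfl
  rw [hn]
  ring


omit hsb in
lemma isoceles {x y z : X} (h : d x y < d y z) : d z x = d y z := by
  have h1 : d z x ≤ d y z := by
    calc d z x ≤ max (d z y) (d y x) := dtri hd _ _ _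
      _ ≤ d y z := max_le (le_of_eq (dsymm hd z y))
          (le_of_lt (by rw [dsymm hd y x]; exact h))
  refine le_antisymm h1 ?_
  by_contra hc
  push_neg at hc
  have h2 : d y z ≤ max (d y x) (d x z) := dtri hd _ _ _
  have h3 : max (d y x) (d x z) < d y z :=
    max_lt (by rw [dsymm hd y x]; exact h) (by rw [dsymm hd x z]; exact hc)
  exact absurd (lt_of_le_of_lt h2 h3) (lt_irrefl _)

lemma sups_eq_E {x y z : X} (hE1 : d x y = d y z)
    (hE2 : d y z = d z x) : sb y z = sb x y ∧ sb z x = sb x y := by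
  have hz : z ∈ sb x y := (mem_sb hd hsb).2
    (le_of_eq (by rw [dsymm hd x z, ← hE2, ← hE1]))
  have hx' : x ∈ sb y z := (mem_sb hd hsb).2
    (le_of_eq (show d y x = d y z by rw [dsymm hd y x]; exact hE1))
  have hy' : y ∈ sb z x := (mem_sb hd hsb).2
    (le_of_eq (show d z y = d z x by rw [dsymm hd z y]; exact hE2))
  constructor
  · apply Finset.Subset.antisymm
    · exact (hsb y z).2.2.2 _ (hsb x y).1 (hsb x y).2.2.1 hz
    · exact (hsb x y).2.2.2 _ (hsb y z).1 hx' (hsb y z).2.1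
  · apply Finset.Subset.antisymm
    · exact (hsb z x).2.2.2 _ (hsb x y).1 hz (hsb x y).2.1
    · exact (hsb x y).2.2.2 _ (hsb z x).1 (hsb z x).2.2.1 hy'

lemma sups_case1 {x y z : X} (h : d x y < d y z) :
    sb z x = sb y z ∧ sb x y ⊂ sb y z := by
  have hiso := isoceles hd h
  constructor
  · rw [sb_congr hd hsb (show d z x = d z y by rw [hiso, dsymm hd y z]),
      sb_symm hd hsb]
  · constructor
    · refine (hsb x y).2.2.2 _ (hsb y z).1 ?_ (hsb y z).2.1
      exact (mem_sb hd hsb).2 (le_of_lt (by rw [dsymm hd y x]; exact h))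
    · intro hsub
      have hzB : z ∈ sb x y := hsub ((hsb y z).2.2.1)
      have hle := (mem_sb hd hsb).1 hzB
      rw [dsymm hd x z, hiso] at hle
      exact absurd (lt_of_lt_of_le h hle) (lt_irrefl _)

omit hsb in
lemma diam_lt_of_ssub {B L : Finset X} (hB : IsBall d B) (hL : IsBall d L)
    (h2 : 1 < B.card) (hBL : B ⊂ L) : diam d B < diam d L := by
  obtain ⟨u, hu, v, hv, huv⟩ :=
    exists_diam hd (Finset.card_pos.1 (lt_trans one_pos h2))
  rw [huv]
  exact subball_dist_lt hd hL hB hBL.subset hBL.2 hu hv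

lemma ne_of_sb_card {x y : X} {B : Finset X}
    (e : sb x y = B) (h2 : 1 < B.card) : x ≠ y := by
  rintro rfl
  rw [sb_self hd hsb] at e
  rw [← e] at h2
  simp at h2

omit hd hsb in
lemma tri_cases (a b c : ℝ) : (a = b ∧ b = c) ∨ a < b ∨ b < c ∨ c < a := by
  by_cases h1 : a < b
  · exact Or.inr (Or.inl h1)
  by_cases h2 : b < c
  · exact Or.inr (Or.inr (Or.inl h2))
  by_cases h3 : c < a
  · exact Or.inr (Or.inr (Or.inr h3))
  push_neg at h1 h2 h3
  exact Or.inl ⟨le_antisymm (le_trans h3 h2) h1, le_antisymm (le_trans h1 h3) h2⟩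

omit hd hsb in
lemma sum_cyc (F : X → X → X → ℝ) :
    (∑ x : X, ∑ y : X, ∑ z : X, F x y z) = ∑ x : X, ∑ y : X, ∑ z : X, F z x y := by
  rw [Finset.sum_comm]
  exact Finset.sum_congr rfl fun a _ => Finset.sum_comm

omit hd hsb in
lemma swap4 {s : Finset (Finset X)} (G : X → X → X → Finset X → ℝ) :
    (∑ x : X, ∑ y : X, ∑ z : X, ∑ B ∈ s, G x y z B)
      = ∑ B ∈ s, ∑ x : X, ∑ y : X, ∑ z : X, G x y z B := by
  calc (∑ x : X, ∑ y : X, ∑ z : X, ∑ B ∈ s, G x y z B)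
      = ∑ x : X, ∑ y : X, ∑ B ∈ s, ∑ z : X, G x y z B :=
        Finset.sum_congr rfl fun x _ => Finset.sum_congr rfl fun y _ => Finset.sum_comm
    _ = ∑ x : X, ∑ B ∈ s, ∑ y : X, ∑ z : X, G x y z B :=
        Finset.sum_congr rfl fun x _ => Finset.sum_comm
    _ = ∑ B ∈ s, ∑ x : X, ∑ y : X, ∑ z : X, G x y z B := Finset.sum_comm

omit hd hsb in
lemma sum3_mul (g : X → X → X → ℝ) (K : ℝ) :
    (∑ x : X, ∑ y : X, ∑ z : X, g x y z * K)
      = (∑ x : X, ∑ y : X, ∑ z : X, g x y z) * K := by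
  rw [Finset.sum_mul]
  refine Finset.sum_congr rfl fun x _ => ?_
  rw [Finset.sum_mul]
  refine Finset.sum_congr rfl fun y _ => ?_
  rw [Finset.sum_mul]

variable (T : Finset X → ℝ)

lemma collapseE (x y z : X) :
    (if (y ≠ x ∧ (z ≠ x ∧ z ≠ y) ∧ (d x y = d y z ∧ d y z = d z x)) then
        m x * m y * m z * T (sb x y) * T (sb y z) * T (sb z x) else 0)
      = ∑ B ∈ Finset.univ.filter (fun B : Finset X => IsBall d B ∧ 1 < B.card),
          (if (sb x y = B ∧ sb y z = B ∧ sb z x = B) then m x * m y * m z else 0)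
            * T B ^ 3 := by
  by_cases h : (y ≠ x ∧ (z ≠ x ∧ z ≠ y) ∧ (d x y = d y z ∧ d y z = d z x))
  · obtain ⟨hyx, ⟨hzx, hzy⟩, hE1, hE2⟩ := h
    have hmem : sb x y ∈ Finset.univ.filter
        (fun B : Finset X => IsBall d B ∧ 1 < B.card) :=
      mem_filter.2 ⟨mem_univ _, (hsb x y).1, sb_card hd hsb (Ne.symm hyx)⟩
    obtain ⟨he1, he2⟩ := sups_eq_E hd hsb hE1 hE2
    rw [if_pos ⟨hyx, ⟨hzx, hzy⟩, hE1, hE2⟩,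
      Finset.sum_eq_single_of_mem (sb x y) hmem (fun b _ hb => by
        rw [if_neg (fun hc => hb hc.1.symm), zero_mul]),
      if_pos ⟨rfl, he1, he2⟩, he1, he2]
    ring
  · rw [if_neg h]
    symm
    refine Finset.sum_eq_zero fun b hb => ?_
    obtain ⟨hballb, h2b⟩ := (mem_filter.1 hb).2
    by_cases hc : sb x y = b ∧ sb y z = b ∧ sb z x = b
    · exfalso
      obtain ⟨e1, e2, e3⟩ := hc
      refine h ⟨Ne.symm (ne_of_sb_card hd hsb e1 h2b),
        ⟨ne_of_sb_card hd hsb e3 h2b, Ne.symm (ne_of_sb_card hd hsb e2 h2b)⟩, ?_, ?_⟩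
      · have q1 : d x y = diam d b := by rw [← e1, diam_sb hd hsb]
        have q2 : d y z = diam d b := by rw [← e2, diam_sb hd hsb]
        rw [q1, q2]
      · have q2 : d y z = diam d b := by rw [← e2, diam_sb hd hsb]
        have q3 : d z x = diam d b := by rw [← e3, diam_sb hd hsb]
        rw [q2, q3]
    · rw [if_neg hc, zero_mul]

lemma collapseC (x y z : X) :
    (if (y ≠ x ∧ (z ≠ x ∧ z ≠ y) ∧ d x y < d y z) then
        m x * m y * m z * T (sb x y) * T (sb y z) * T (sb z x) else 0)
      = ∑ B ∈ Finset.univ.filter (fun B : Finset X => IsBall d B ∧ 1 < B.card),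
          ∑ L ∈ Finset.univ.filter (fun L : Finset X => IsBall d L ∧ B ⊂ L),
            (if (sb x y = B ∧ sb y z = L ∧ sb z x = L) then m x * m y * m z else 0)
              * (T L ^ 2 * T B) := by
  by_cases h : (y ≠ x ∧ (z ≠ x ∧ z ≠ y) ∧ d x y < d y z)
  · obtain ⟨hyx, ⟨hzx, hzy⟩, hlt⟩ := h
    obtain ⟨he3, hBL⟩ := sups_case1 hd hsb hlt
    have hmemB : sb x y ∈ Finset.univ.filter
        (fun B : Finset X => IsBall d B ∧ 1 < B.card) :=
      mem_filter.2 ⟨mem_univ _, (hsb x y).1, sb_card hd hsb (Ne.symm hyx)⟩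
    have hmemL : sb y z ∈ Finset.univ.filter
        (fun L : Finset X => IsBall d L ∧ sb x y ⊂ L) :=
      mem_filter.2 ⟨mem_univ _, (hsb y z).1, hBL⟩
    rw [if_pos ⟨hyx, ⟨hzx, hzy⟩, hlt⟩,
      Finset.sum_eq_single_of_mem (sb x y) hmemB (fun b _ hb =>
        Finset.sum_eq_zero fun l _ => by
          rw [if_neg (fun hc => hb hc.1.symm), zero_mul]),
      Finset.sum_eq_single_of_mem (sb y z) hmemL (fun l _ hl => by
        rw [if_neg (fun hc => hl hc.2.1.symm), zero_mul]),
      if_pos ⟨rfl, rfl, he3⟩, he3]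
    ring
  · rw [if_neg h]
    symm
    refine Finset.sum_eq_zero fun b hb => Finset.sum_eq_zero fun l hl => ?_
    obtain ⟨hballb, h2b⟩ := (mem_filter.1 hb).2
    obtain ⟨hballl, hbl⟩ := (mem_filter.1 hl).2
    by_cases hc : sb x y = b ∧ sb y z = l ∧ sb z x = l
    · exfalso
      obtain ⟨e1, e2, e3⟩ := hc
      have h2l : 1 < l.card := lt_of_lt_of_le h2b (Finset.card_le_card hbl.subset)
      refine h ⟨Ne.symm (ne_of_sb_card hd hsb e1 h2b),
        ⟨ne_of_sb_card hd hsb e3 h2l, Ne.symm (ne_of_sb_card hd hsb e2 h2l)⟩, ?_⟩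
      have q1 : d x y = diam d b := by rw [← e1, diam_sb hd hsb]
      have q2 : d y z = diam d l := by rw [← e2, diam_sb hd hsb]
      rw [q1, q2]
      exact diam_lt_of_ssub hd hballb hballl h2b hbl
    · rw [if_neg hc, zero_mul]

omit hsb in
lemma split_cases (x y z : X) (r : ℝ) :
    (if (y ≠ x ∧ (z ≠ x ∧ z ≠ y)) then r else 0)
      = (if (y ≠ x ∧ (z ≠ x ∧ z ≠ y) ∧ (d x y = d y z ∧ d y z = d z x)) then r else 0)
        + (if (y ≠ x ∧ (z ≠ x ∧ z ≠ y) ∧ d x y < d y z) then r else 0)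
        + (if (y ≠ x ∧ (z ≠ x ∧ z ≠ y) ∧ d y z < d z x) then r else 0)
        + (if (y ≠ x ∧ (z ≠ x ∧ z ≠ y) ∧ d z x < d x y) then r else 0) := by
  by_cases hP : (y ≠ x ∧ (z ≠ x ∧ z ≠ y))
  · rcases tri_cases (d x y) (d y z) (d z x) with ⟨hE1, hE2⟩ | h1 | h2 | h3
    · have n1 : ¬(y ≠ x ∧ (z ≠ x ∧ z ≠ y) ∧ d x y < d y z) := fun h => by
        have hh := h.2.2
        rw [hE1] at hh
        exact lt_irrefl _ hh
      have n2 : ¬(y ≠ x ∧ (z ≠ x ∧ z ≠ y) ∧ d y z < d z x) := fun h => by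
        have hh := h.2.2
        rw [hE2] at hh
        exact lt_irrefl _ hh
      have n3 : ¬(y ≠ x ∧ (z ≠ x ∧ z ≠ y) ∧ d z x < d x y) := fun h => by
        have hh := h.2.2
        rw [← hE2, ← hE1] at hh
        exact lt_irrefl _ hh
      rw [if_pos hP, if_pos ⟨hP.1, hP.2, hE1, hE2⟩, if_neg n1, if_neg n2, if_neg n3]
      ring
    · have hiso := isoceles hd h1
      have nE : ¬(y ≠ x ∧ (z ≠ x ∧ z ≠ y) ∧ (d x y = d y z ∧ d y z = d z x)) :=
        fun h => (ne_of_lt h1) h.2.2.1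
      have n2 : ¬(y ≠ x ∧ (z ≠ x ∧ z ≠ y) ∧ d y z < d z x) := fun h => by
        have hh := h.2.2
        rw [hiso] at hh
        exact lt_irrefl _ hh
      have n3 : ¬(y ≠ x ∧ (z ≠ x ∧ z ≠ y) ∧ d z x < d x y) := fun h => by
        have hh := h.2.2
        rw [hiso] at hh
        exact absurd hh (not_lt.2 (le_of_lt h1))
      rw [if_pos hP, if_neg nE, if_pos ⟨hP.1, hP.2, h1⟩, if_neg n2, if_neg n3]
      ring
    · have hiso := isoceles hd h2
      have nE : ¬(y ≠ x ∧ (z ≠ x ∧ z ≠ y) ∧ (d x y = d y z ∧ d y z = d z x)) :=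
        fun h => (ne_of_lt h2) h.2.2.2
      have n1 : ¬(y ≠ x ∧ (z ≠ x ∧ z ≠ y) ∧ d x y < d y z) := fun h => by
        have hh := h.2.2
        rw [hiso] at hh
        exact absurd hh (not_lt.2 (le_of_lt h2))
      have n3 : ¬(y ≠ x ∧ (z ≠ x ∧ z ≠ y) ∧ d z x < d x y) := fun h => by
        have hh := h.2.2
        rw [hiso] at hh
        exact lt_irrefl _ hh
      rw [if_pos hP, if_neg nE, if_neg n1, if_pos ⟨hP.1, hP.2, h2⟩, if_neg n3]
      ring
    · have hiso := isoceles hd h3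
      have nE : ¬(y ≠ x ∧ (z ≠ x ∧ z ≠ y) ∧ (d x y = d y z ∧ d y z = d z x)) :=
        fun h => by
          have hh := h3
          rw [h.2.2.1, h.2.2.2] at hh
          exact lt_irrefl _ hh
      have n1 : ¬(y ≠ x ∧ (z ≠ x ∧ z ≠ y) ∧ d x y < d y z) := fun h => by
        have hh := h.2.2
        rw [← hiso] at hh
        exact lt_irrefl _ hh
      have n2 : ¬(y ≠ x ∧ (z ≠ x ∧ z ≠ y) ∧ d y z < d z x) := fun h => by
        have hh := h.2.2
        rw [hiso] at hh
        exact absurd hh (not_lt.2 (le_of_lt h3))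
      rw [if_pos hP, if_neg nE, if_neg n1, if_neg n2, if_pos ⟨hP.1, hP.2, h3⟩]
      ring
  · rw [if_neg hP, if_neg (fun h => hP ⟨h.1, h.2.1⟩), if_neg (fun h => hP ⟨h.1, h.2.1⟩),
      if_neg (fun h => hP ⟨h.1, h.2.1⟩), if_neg (fun h => hP ⟨h.1, h.2.1⟩)]
    ring

end Main

end TraceAux

open TraceAux

/-- Trace of the cube of the replica sup-matrix. -/
theorem trace_Q_cubed (d : X → X → ℝ) (m : X → ℝ)
    (sb : X → X → Finset X) (pr : Finset X → Finset X → Finset X) (T : Finset X → ℝ)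
    (hd : IsUltra d) (hm : ∀ x, 0 < m x) (hsb : SupSpec d sb) (hpr : PredSpec d pr) :
    ∑ A : X, ∑ B ∈ Finset.univ.filter (fun B : X => B ≠ A),
        ∑ C ∈ Finset.univ.filter (fun C : X => C ≠ A ∧ C ≠ B),
          m A * m B * m C * T (sb A B) * T (sb B C) * T (sb C A)
      = (∑ B ∈ Finset.univ.filter (fun B : Finset X => IsBall d B ∧ 1 < B.card),
            (T B) ^ 3 * (3 * nu m B * dnu2 d m B - 2 * dnu3 d m B))
        + 3 * ∑ B ∈ Finset.univ.filter (fun B : Finset X => IsBall d B ∧ 1 < B.card),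
            dnu2 d m B *
              ∑ L ∈ Finset.univ.filter (fun L : Finset X => IsBall d L ∧ B ⊂ L),
                (nu m L - nu m (pr L B)) * (T L) ^ 2 * T B := by
  classical
  have hLHS : (∑ A : X, ∑ B ∈ Finset.univ.filter (fun B : X => B ≠ A),
        ∑ C ∈ Finset.univ.filter (fun C : X => C ≠ A ∧ C ≠ B),
          m A * m B * m C * T (sb A B) * T (sb B C) * T (sb C A))
      = ∑ x : X, ∑ y : X, ∑ z : X,
          (if (y ≠ x ∧ (z ≠ x ∧ z ≠ y)) then
            m x * m y * m z * T (sb x y) * T (sb y z) * T (sb z x) else 0) := by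
    refine Finset.sum_congr rfl fun x _ => ?_
    rw [Finset.sum_filter]
    refine Finset.sum_congr rfl fun y _ => ?_
    by_cases hy : y ≠ x
    · rw [if_pos hy, Finset.sum_filter]
      refine Finset.sum_congr rfl fun z _ => ?_
      by_cases hz : z ≠ x ∧ z ≠ y
      · rw [if_pos hz, if_pos ⟨hy, hz⟩]
      · rw [if_neg hz, if_neg (fun h => hz h.2)]
    · rw [if_neg hy]
      symm
      exact Finset.sum_eq_zero fun z _ => if_neg (fun h => hy h.1)
  rw [hLHS]
  rw [Finset.sum_congr rfl (fun x _ => Finset.sum_congr rfl fun y _ =>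
    Finset.sum_congr rfl fun z _ => split_cases hd x y z
      (m x * m y * m z * T (sb x y) * T (sb y z) * T (sb z x)))]
  simp only [Finset.sum_add_distrib]
  have hSE : (∑ x : X, ∑ y : X, ∑ z : X,
        (if (y ≠ x ∧ (z ≠ x ∧ z ≠ y) ∧ (d x y = d y z ∧ d y z = d z x)) then
          m x * m y * m z * T (sb x y) * T (sb y z) * T (sb z x) else 0))
      = ∑ B ∈ Finset.univ.filter (fun B : Finset X => IsBall d B ∧ 1 < B.card),
          (T B) ^ 3 * (3 * nu m B * dnu2 d m B - 2 * dnu3 d m B) := by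
    rw [Finset.sum_congr rfl (fun x _ => Finset.sum_congr rfl fun y _ =>
      Finset.sum_congr rfl fun z _ => collapseE hd hsb T x y z)]
    rw [swap4]
    refine Finset.sum_congr rfl fun B hB => ?_
    obtain ⟨hball, h2⟩ := (Finset.mem_filter.1 hB).2
    rw [sum3_mul, tripleB hd hsb hball h2, mul_comm]
  have hS1 : (∑ x : X, ∑ y : X, ∑ z : X,
        (if (y ≠ x ∧ (z ≠ x ∧ z ≠ y) ∧ d x y < d y z) then
          m x * m y * m z * T (sb x y) * T (sb y z) * T (sb z x) else 0))
      = ∑ B ∈ Finset.univ.filter (fun B : Finset X => IsBall d B ∧ 1 < B.card),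
          dnu2 d m B *
            ∑ L ∈ Finset.univ.filter (fun L : Finset X => IsBall d L ∧ B ⊂ L),
              (nu m L - nu m (pr L B)) * (T L) ^ 2 * T B := by
    rw [Finset.sum_congr rfl (fun x _ => Finset.sum_congr rfl fun y _ =>
      Finset.sum_congr rfl fun z _ => collapseC hd hsb T x y z)]
    rw [swap4]
    refine Finset.sum_congr rfl fun B hB => ?_
    obtain ⟨hball, h2⟩ := (Finset.mem_filter.1 hB).2
    rw [swap4, Finset.mul_sum]
    refine Finset.sum_congr rfl fun L hL => ?_
    obtain ⟨hballL, hBL⟩ := (Finset.mem_filter.1 hL).2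
    rw [sum3_mul, pairBL hd hsb hpr hball h2 hballL hBL]
    ring
  have hS2 : (∑ x : X, ∑ y : X, ∑ z : X,
        (if (y ≠ x ∧ (z ≠ x ∧ z ≠ y) ∧ d y z < d z x) then
          m x * m y * m z * T (sb x y) * T (sb y z) * T (sb z x) else 0))
      = ∑ x : X, ∑ y : X, ∑ z : X,
        (if (y ≠ x ∧ (z ≠ x ∧ z ≠ y) ∧ d x y < d y z) then
          m x * m y * m z * T (sb x y) * T (sb y z) * T (sb z x) else 0) := by
    rw [sum_cyc (fun x y z =>
      (if (y ≠ x ∧ (z ≠ x ∧ z ≠ y) ∧ d y z < d z x) then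
        m x * m y * m z * T (sb x y) * T (sb y z) * T (sb z x) else 0))]
    refine Finset.sum_congr rfl fun x _ => Finset.sum_congr rfl fun y _ =>
      Finset.sum_congr rfl fun z _ => ?_
    refine if_congr ?_ (by ring) rfl
    constructor
    · rintro ⟨a, ⟨b, c⟩, q⟩
      exact ⟨c, ⟨Ne.symm a, Ne.symm b⟩, q⟩
    · rintro ⟨c, ⟨a, b⟩, q⟩
      exact ⟨Ne.symm a, ⟨Ne.symm b, c⟩, q⟩
  have hS3 : (∑ x : X, ∑ y : X, ∑ z : X,
        (if (y ≠ x ∧ (z ≠ x ∧ z ≠ y) ∧ d z x < d x y) then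
          m x * m y * m z * T (sb x y) * T (sb y z) * T (sb z x) else 0))
      = ∑ x : X, ∑ y : X, ∑ z : X,
        (if (y ≠ x ∧ (z ≠ x ∧ z ≠ y) ∧ d y z < d z x) then
          m x * m y * m z * T (sb x y) * T (sb y z) * T (sb z x) else 0) := by
    rw [sum_cyc (fun x y z =>
      (if (y ≠ x ∧ (z ≠ x ∧ z ≠ y) ∧ d z x < d x y) then
        m x * m y * m z * T (sb x y) * T (sb y z) * T (sb z x) else 0))]
    refine Finset.sum_congr rfl fun x _ => Finset.sum_congr rfl fun y _ =>
      Finset.sum_congr rfl fun z _ => ?_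
    refine if_congr ?_ (by ring) rfl
    constructor
    · rintro ⟨a, ⟨b, c⟩, q⟩
      exact ⟨c, ⟨Ne.symm a, Ne.symm b⟩, q⟩
    · rintro ⟨c, ⟨a, b⟩, q⟩
      exact ⟨Ne.symm a, ⟨Ne.symm b, c⟩, q⟩
  rw [hSE, hS3, hS2, hS1]
  ring
end
end
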